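/- arXiv:2405.07947 — 3 statements merged into one kernel-verified Lean document; each statement's English description precedes it below -/
import Mathlib

section
/- Let F be a Ferrers diagram whose first row has length k and second row has length ℓ. If (ℓ, k−ℓ+1) ∈ F, then the divisor D_{k+1,1} on R(F), the sum of all vertices not in the first row, has positive rank. -/
open Finset

open scoped Classical

/-- A divisor is effective if it is nonnegative everywhere. -/
def Effective {V : Type*} (D : V → ℤ) : Prop := ∀ v, 0 ≤ D v

/-- The degree of a divisor: the total number of chips. -/
def degD {V : Type*} [Fintype V] (D : V → ℤ) : ℤ := ∑ v, D v

/-- The effect on a vertex `w` of firing each vertex `u` with multiplicity `f u`. -/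
noncomputable def lap {V : Type*} [Fintype V] (G : SimpleGraph V) (f : V → ℤ) (w : V) : ℤ :=
  (∑ u, f u * (if G.Adj u w then 1 else 0)) - f w * (∑ u, if G.Adj u w then (1 : ℤ) else 0)

/-- Two divisors are (chip-firing) equivalent if one is obtained from the other by a
sequence of chip-firing moves, i.e. they differ by a Laplacian of some `f : V → ℤ`. -/
def LinEquiv {V : Type*} [Fintype V] (G : SimpleGraph V) (D D' : V → ℤ) : Prop :=
  ∃ f : V → ℤ, ∀ w, D' w = D w + lap G f w

/-- A divisor has positive rank if for every vertex there is an equivalent effective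
divisor with a chip at that vertex. -/
def PositiveRank {V : Type*} [Fintype V] (G : SimpleGraph V) (D : V → ℤ) : Prop :=
  ∀ v, ∃ D', LinEquiv G D D' ∧ Effective D' ∧ 0 < D' v

/-- A Ferrers diagram: a finite subset of ℕ² with coordinates ≥ 1, closed under
decreasing either coordinate toward 1. -/
def IsFerrers (F : Finset (ℕ × ℕ)) : Prop :=
  ∀ p ∈ F, 1 ≤ p.1 ∧ 1 ≤ p.2 ∧ (p.1 = 1 ∨ (p.1 - 1, p.2) ∈ F) ∧ (p.2 = 1 ∨ (p.1, p.2 - 1) ∈ F)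

/-- The Ferrers rook graph: vertices are points of `F`, two distinct points adjacent
iff they share a row or a column. -/
def rookGraph (F : Finset (ℕ × ℕ)) : SimpleGraph {p // p ∈ F} where
  Adj a b := a ≠ b ∧ ((a : ℕ × ℕ).1 = (b : ℕ × ℕ).1 ∨ (a : ℕ × ℕ).2 = (b : ℕ × ℕ).2)
  symm := ⟨fun a b h => ⟨h.1.symm, h.2.imp Eq.symm Eq.symm⟩⟩
  loopless := ⟨fun a h => h.1 rfl⟩

/-- The set of degrees of positive-rank divisors on `R(F)`; its least element is the gonality. -/
def gonSet (F : Finset (ℕ × ℕ)) : Set ℤ :=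
  {d | ∃ D : {p // p ∈ F} → ℤ, PositiveRank (rookGraph F) D ∧ degD D = d}

/-- The divisor `D_{x,y}`: one chip on each vertex not in column `x` and not in row `y`. -/
def Dxy (F : Finset (ℕ × ℕ)) (x y : ℕ) : {p // p ∈ F} → ℤ :=
  fun p => if (p : ℕ × ℕ).1 ≠ x ∧ (p : ℕ × ℕ).2 ≠ y then 1 else 0


/-!
The divisor `D_{k+1,1}` is the indicator of the vertices off the first row. Firing that set
keeps the divisor effective, since each of its vertices has exactly one neighbour outside it
(the first-row vertex of its column), and gives a chip to every first-row vertex that has a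
vertex above it, i.e. to the first `ℓ` columns. For a first-row vertex `(a, 1)` with `a > ℓ`,
fire in addition the first `ℓ` columns, which contain all rows above the first. This sends a
chip from `(ℓ, 1)` to `(a, 1)`; a first-row vertex `(x, 1)` with `x ≤ ℓ` loses the `k - ℓ`
chips sent to the columns beyond `ℓ`, but it received at least `k - ℓ` from its own column,
whose height is at least `k - ℓ + 1` because `(ℓ, k - ℓ + 1) ∈ F`.
-/

section ChipFiring

variable {V : Type*} [Fintype V] (G : SimpleGraph V)

lemma lap_apply_eq_sum (f : V → ℤ) (w : V) :
    lap G f w = ∑ u ∈ G.neighborFinset w, (f u - f w) := by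
  simp [lap, sum_sub_distrib, ← sum_filter, SimpleGraph.neighborFinset_eq_filter, G.adj_comm,
    mul_comm]

lemma lap_add (f g : V → ℤ) : lap G (f + g) = lap G f + lap G g := by
  ext w
  simp only [lap_apply_eq_sum, Pi.add_apply, ← sum_add_distrib]
  exact sum_congr rfl fun _ _ => by ring

lemma lap_indicator_of_notMem [DecidableEq V] {S : Finset V} {w : V} (hw : w ∉ S) :
    lap G ((S : Set V).indicator 1) w = #(G.neighborFinset w ∩ S) := by
  simp [lap_apply_eq_sum, hw, Set.indicator_apply]

lemma lap_indicator_of_mem [DecidableEq V] {S : Finset V} {w : V} (hw : w ∈ S) :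
    lap G ((S : Set V).indicator 1) w = -#(G.neighborFinset w \ S) := by
  rw [lap_apply_eq_sum, sdiff_eq_filter, card_filter, Nat.cast_sum, ← sum_neg_distrib]
  exact sum_congr rfl fun u _ => by by_cases hu : u ∈ S <;> simp [hu, hw]

lemma lap_indicator_pos_of_adj {S : Finset V} {w u : V} (hw : w ∉ S) (hu : u ∈ S)
    (hwu : G.Adj w u) : 0 < lap G ((S : Set V).indicator 1) w := by
  classical
  rw [lap_indicator_of_notMem G hw]
  exact_mod_cast card_pos.2 ⟨u, mem_inter.2 ⟨(G.mem_neighborFinset w u).2 hwu, hu⟩⟩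

lemma LinEquiv.refl (D : V → ℤ) : LinEquiv G D D :=
  ⟨0, fun w => by simp [lap_apply_eq_sum]⟩

lemma LinEquiv.add_lap {D D' : V → ℤ} (h : LinEquiv G D D') (f : V → ℤ) :
    LinEquiv G D (D' + lap G f) := by
  obtain ⟨g, hg⟩ := h
  exact ⟨g + f, fun w => by simp [hg, lap_add, add_assoc]⟩

end ChipFiring

namespace IsFerrers

variable {F : Finset (ℕ × ℕ)}

lemma mem_of_fst_le (hF : IsFerrers F) {a a' b : ℕ} (h : (a, b) ∈ F) (ha' : 1 ≤ a')
    (hle : a' ≤ a) : (a', b) ∈ F := by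
  induction a, hle using Nat.le_induction with
  | base => exact h
  | succ n hn ih => exact ih (by simpa using (hF _ h).2.2.1.resolve_left (by omega))

lemma mem_of_snd_le (hF : IsFerrers F) {a b b' : ℕ} (h : (a, b) ∈ F) (hb' : 1 ≤ b')
    (hle : b' ≤ b) : (a, b') ∈ F := by
  induction b, hle using Nat.le_induction with
  | base => exact h
  | succ n hn ih => exact ih (by simpa using (hF _ h).2.2.2.resolve_left (by omega))

lemma mem_of_le (hF : IsFerrers F) {a a' b b' : ℕ} (h : (a, b) ∈ F) (ha' : 1 ≤ a')
    (ha : a' ≤ a) (hb' : 1 ≤ b') (hb : b' ≤ b) : (a', b') ∈ F :=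
  hF.mem_of_snd_le (hF.mem_of_fst_le h ha' ha) hb' hb

lemma fst_le_of_succ_notMem (hF : IsFerrers F) {k b a c : ℕ} (hk : (k + 1, b) ∉ F)
    (hb : 1 ≤ b) (h : (a, c) ∈ F) (hbc : b ≤ c) : a ≤ k := by
  by_contra! hka
  exact hk (hF.mem_of_le h (by omega) hka hb hbc)

end IsFerrers

section RookGraph

def offFirstRow (F : Finset (ℕ × ℕ)) : Finset {p // p ∈ F} := {u | (u : ℕ × ℕ).2 ≠ 1}

def firstColumns (F : Finset (ℕ × ℕ)) (ℓ : ℕ) : Finset {p // p ∈ F} := {u | (u : ℕ × ℕ).1 ≤ ℓ}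

variable {F : Finset (ℕ × ℕ)}

lemma mem_neighborFinset_rookGraph {u w : {p // p ∈ F}} :
    u ∈ (rookGraph F).neighborFinset w ↔
      w ≠ u ∧ ((w : ℕ × ℕ).1 = (u : ℕ × ℕ).1 ∨ (w : ℕ × ℕ).2 = (u : ℕ × ℕ).2) :=
  SimpleGraph.mem_neighborFinset _ _ _

lemma card_neighborFinset_sdiff_offFirstRow_le_one {w : {p // p ∈ F}}
    (hw : w ∈ offFirstRow F) : #((rookGraph F).neighborFinset w \ offFirstRow F) ≤ 1 := by
  rw [card_le_one]
  intro u hu u' hu'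
  simp only [offFirstRow, mem_sdiff, mem_filter, mem_univ, true_and, not_not,
    mem_neighborFinset_rookGraph] at hw hu hu'
  exact Subtype.ext (Prod.ext (by grind) (by grind))

lemma offFirstRow_subset_firstColumns (hF : IsFerrers F) {ℓ : ℕ} (hl : (ℓ + 1, 2) ∉ F) :
    offFirstRow F ⊆ firstColumns F ℓ := by
  rintro ⟨⟨a, b⟩, hab⟩ hu
  simp only [offFirstRow, firstColumns, mem_filter, mem_univ, true_and] at hu ⊢
  exact hF.fst_le_of_succ_notMem hl (by omega) hab (by have := (hF _ hab).2.1; omega)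

lemma neighborFinset_subset_firstColumns (hF : IsFerrers F) {ℓ : ℕ} (hl : (ℓ + 1, 2) ∉ F)
    {w : {p // p ∈ F}} (hw : w ∈ offFirstRow F) :
    (rookGraph F).neighborFinset w ⊆ firstColumns F ℓ := by
  have hU := offFirstRow_subset_firstColumns hF hl
  intro u hu
  rcases (mem_neighborFinset_rookGraph.1 hu).2 with hcol | hrow
  · have hwL := hU hw
    simp only [firstColumns, mem_filter, mem_univ, true_and] at hwL ⊢
    omega
  · refine hU ?_
    simp only [offFirstRow, mem_filter, mem_univ, true_and] at hw ⊢
    rwa [← hrow]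

lemma card_neighborFinset_sdiff_firstColumns_le (hF : IsFerrers F) {k ℓ : ℕ}
    (hk : (k + 1, 1) ∉ F) (hcond : (ℓ, k - ℓ + 1) ∈ F) {w : {p // p ∈ F}}
    (hw : w ∉ offFirstRow F) (hwl : w ∈ firstColumns F ℓ) :
    #((rookGraph F).neighborFinset w \ firstColumns F ℓ) ≤
      #((rookGraph F).neighborFinset w ∩ offFirstRow F) := by
  obtain ⟨⟨a, b⟩, hab⟩ := w
  simp only [offFirstRow, firstColumns, mem_filter, mem_univ, true_and, not_not] at hw hwl
  subst hw
  have hcol (u : {p // p ∈ F}) : (u : ℕ × ℕ).1 ≤ k :=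
    hF.fst_le_of_succ_notMem hk le_rfl u.2 (hF _ u.2).2.1
  have hmem (u : {p // p ∈ F}) : (a, (u : ℕ × ℕ).1 - ℓ + 1) ∈ F :=
    hF.mem_of_le hcond (hF _ hab).1 hwl (by omega) (by have := hcol u; omega)
  have hfar {u} (hu : u ∈ (rookGraph F).neighborFinset ⟨(a, 1), hab⟩ \ firstColumns F ℓ) :
      (u : ℕ × ℕ).2 = 1 ∧ ℓ < (u : ℕ × ℕ).1 := by
    simp only [mem_sdiff, mem_neighborFinset_rookGraph, firstColumns, mem_filter, mem_univ,
      true_and] at hu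
    omega
  -- the neighbour `(x, 1)` with `x > ℓ` goes to `(a, x - ℓ + 1)`, below `(ℓ, k - ℓ + 1)`
  refine card_le_card_of_injOn (fun u => ⟨(a, (u : ℕ × ℕ).1 - ℓ + 1), hmem u⟩) ?_ ?_
  · intro u hu
    obtain ⟨hu1, huℓ⟩ := hfar hu
    simp only [coe_inter, Set.mem_inter_iff, mem_coe, mem_neighborFinset_rookGraph, ne_eq,
      offFirstRow, mem_filter, mem_univ, true_and, Subtype.mk.injEq, Prod.mk.injEq, true_or,
      and_true]
    omega
  · intro u hu u' hu' h
    obtain ⟨hu1, huℓ⟩ := hfar hu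
    obtain ⟨hu1', huℓ'⟩ := hfar hu'
    simp only [Subtype.mk.injEq, Prod.mk.injEq] at h
    exact Subtype.ext (Prod.ext (by omega) (by omega))

lemma effective_indicator_add_lap_offFirstRow :
    Effective ((offFirstRow F : Set {p // p ∈ F}).indicator 1 +
      lap (rookGraph F) ((offFirstRow F : Set {p // p ∈ F}).indicator 1)) := by
  intro w
  by_cases hw : w ∈ offFirstRow F
  · have hcard := card_neighborFinset_sdiff_offFirstRow_le_one hw
    simp only [Pi.add_apply, lap_indicator_of_mem _ hw, Set.indicator_of_mem (mem_coe.2 hw),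
      Pi.one_apply]
    omega
  · simp [lap_indicator_of_notMem _ hw, hw]

lemma effective_indicator_add_lap_offFirstRow_add_lap_firstColumns (hF : IsFerrers F)
    {k ℓ : ℕ} (hk : (k + 1, 1) ∉ F) (hl : (ℓ + 1, 2) ∉ F)
    (hcond : (ℓ, k - ℓ + 1) ∈ F) :
    Effective ((offFirstRow F : Set {p // p ∈ F}).indicator 1 +
      lap (rookGraph F) ((offFirstRow F : Set {p // p ∈ F}).indicator 1) +
      lap (rookGraph F) ((firstColumns F ℓ : Set {p // p ∈ F}).indicator 1)) := by
  intro w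
  have hU := effective_indicator_add_lap_offFirstRow w
  by_cases hwL : w ∈ firstColumns F ℓ
  · by_cases hwU : w ∈ offFirstRow F
    · have hN := sdiff_eq_empty_iff_subset.2 (neighborFinset_subset_firstColumns hF hl hwU)
      simpa [lap_indicator_of_mem _ hwL, hN] using hU
    · have hcard := card_neighborFinset_sdiff_firstColumns_le hF hk hcond hwU hwL
      simp only [Pi.add_apply, lap_indicator_of_notMem _ hwU, lap_indicator_of_mem _ hwL,
        Set.indicator_of_notMem (mt mem_coe.1 hwU)]
      omega
  · simp only [Pi.add_apply, lap_indicator_of_notMem _ hwL] at hU ⊢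
    positivity

lemma Dxy_succ_one_eq_indicator (hF : IsFerrers F) {k : ℕ}
    (hk : (k + 1, 1) ∉ F) :
    Dxy F (k + 1) 1 = (offFirstRow F : Set {p // p ∈ F}).indicator 1 := by
  ext ⟨⟨a, b⟩, hab⟩
  have hak : a ≠ k + 1 := by
    have := hF.fst_le_of_succ_notMem hk le_rfl hab (hF _ hab).2.1
    omega
  by_cases hb : b = 1 <;> simp [Dxy, offFirstRow, hb, hak]

end RookGraph

theorem stmt3_general (F : Finset (ℕ × ℕ)) (hF : IsFerrers F) (k ℓ : ℕ)
    (hk' : (k + 1, 1) ∉ F)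
    (hl : (ℓ, 2) ∈ F) (hl' : (ℓ + 1, 2) ∉ F)
    (hcond : (ℓ, k - ℓ + 1) ∈ F) :
    PositiveRank (rookGraph F) (Dxy F (k + 1) 1) := by
  rw [Dxy_succ_one_eq_indicator hF hk']
  intro v
  by_cases hvU : v ∈ offFirstRow F
  · exact ⟨_, .refl _ _, Set.indicator_nonneg fun _ _ => zero_le_one, by simp [hvU]⟩
  obtain ⟨⟨a, b⟩, hab⟩ := v
  have hb : b = 1 := by simpa [offFirstRow] using hvU
  subst hb
  by_cases haℓ : a ≤ ℓ
  · have ha2 : (a, 2) ∈ F := hF.mem_of_le hl (hF _ hab).1 haℓ one_le_two le_rfl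
    refine ⟨_, (LinEquiv.refl _ _).add_lap _ _, effective_indicator_add_lap_offFirstRow, ?_⟩
    have hpos := lap_indicator_pos_of_adj (rookGraph F) hvU (u := ⟨(a, 2), ha2⟩)
      (by simp [offFirstRow]) (by simp [rookGraph])
    simpa [hvU] using hpos
  · have hℓ1 : (ℓ, 1) ∈ F := hF.mem_of_snd_le hl le_rfl one_le_two
    refine ⟨_, ((LinEquiv.refl _ _).add_lap _ _).add_lap _ _,
      effective_indicator_add_lap_offFirstRow_add_lap_firstColumns hF hk' hl' hcond, ?_⟩
    have hpos := lap_indicator_pos_of_adj (rookGraph F) (S := firstColumns F ℓ)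
      (w := ⟨(a, 1), hab⟩) (u := ⟨(ℓ, 1), hℓ1⟩) (by simpa [firstColumns] using haℓ)
      (by simp [firstColumns]) (by simp only [rookGraph, ne_eq, Subtype.mk.injEq,
        Prod.mk.injEq, and_true, or_true]; omega)
    have hU := effective_indicator_add_lap_offFirstRow ⟨(a, 1), hab⟩
    simp only [Pi.add_apply] at hU ⊢
    omega

theorem stmt3 (F : Finset (ℕ × ℕ)) (hF : IsFerrers F) (k ℓ : ℕ)
    (hk : (k, 1) ∈ F) (hk' : (k + 1, 1) ∉ F)
    (hl : (ℓ, 2) ∈ F) (hl' : (ℓ + 1, 2) ∉ F)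
    (hcond : (ℓ, k - ℓ + 1) ∈ F) :
    PositiveRank (rookGraph F) (Dxy F (k + 1) 1) :=
  stmt3_general F hF k ℓ hk' hl hl' hcond
end

section
/- Let F be a Ferrers diagram whose first row has length k and second row has length ℓ ≥ 1. If (ℓ, k−ℓ+1) ∉ F, then the divisor D_{k+1,1} on R(F) (the sum of all vertices not in the first row) does not have positive rank. -/
open Finset

open scoped Classical

/-!
Firing every cell outside the first row once turns `D_{k+1,1}` into a divisor supported on the
first row, with no chip on `(k, 1)`. That divisor is `(k, 1)`-reduced: Dhar's burning algorithm
started at `(k, 1)` burns the whole graph. The only delicate cell is `(ℓ, 1)`: because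
`(ℓ, k - ℓ + 1) ∉ F` it carries fewer than `k - ℓ` chips, while its `k - ℓ` neighbours to the
right are already on fire. A reduced divisor with no chip at `q` is equivalent to no effective
divisor with a chip at `q`.
-/
section ChipFiring

variable {V : Type*} [Fintype V] (G : SimpleGraph V)

theorem lap_eq_sum (f : V → ℤ) (w : V) :
    lap G f w = ∑ u, if G.Adj u w then f u - f w else 0 := by
  rw [lap, mul_sum, ← sum_sub_distrib]
  refine sum_congr rfl fun u _ => ?_
  split_ifs <;> ring

theorem lap_sub (f g : V → ℤ) (w : V) : lap G (f - g) w = lap G f w - lap G g w := by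
  simp only [lap_eq_sum, ← sum_sub_distrib, Pi.sub_apply]
  refine sum_congr rfl fun u _ => ?_
  split_ifs <;> ring

theorem lap_indicator (P : V → Prop) [DecidablePred P] (w : V) :
    lap G (fun v => if P v then 1 else 0) w =
      if P w then -(#{u | G.Adj u w ∧ ¬P u} : ℤ) else #{u | G.Adj u w ∧ P u} := by
  rw [lap_eq_sum]
  split_ifs with hw
  · rw [natCast_card_filter, ← sum_neg_distrib]
    refine sum_congr rfl fun u _ => ?_
    by_cases hu : P u <;> by_cases hadj : G.Adj u w <;> simp [hu, hadj]
  · rw [natCast_card_filter]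
    refine sum_congr rfl fun u _ => ?_
    by_cases hu : P u <;> simp [hu]

theorem PositiveRank.of_linEquiv {D D' : V → ℤ} (h : LinEquiv G D D') (hD : PositiveRank G D) :
    PositiveRank G D' := by
  obtain ⟨g, hg⟩ := h
  intro v
  obtain ⟨E, ⟨f, hf⟩, hE, hEv⟩ := hD v
  exact ⟨E, ⟨f - g, fun w => by rw [lap_sub, hf w, hg w]; ring⟩, hE, hEv⟩

noncomputable def earlierNeighbors (r : V → ℕ) (v : V) : Finset V := {u | G.Adj u v ∧ r u < r v}

@[simp]
theorem mem_earlierNeighbors {r : V → ℕ} {u v : V} :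
    u ∈ earlierNeighbors G r v ↔ G.Adj u v ∧ r u < r v := by
  simp [earlierNeighbors]

/-- Dhar's burning algorithm started at `q` burns every vertex, vertex `v` catching fire once
more than `D v` of its neighbours burn; `r` records the order. -/
def IsBurningOrder (D : V → ℤ) (q : V) (r : V → ℕ) : Prop :=
  ∀ v, v ≠ q → D v < #(earlierNeighbors G r v)

variable {G}

theorem lt_card_earlierNeighbors_of_adj {D : V → ℤ} {r : V → ℕ} {u v : V} (hv : D v ≤ 0)
    (huv : G.Adj u v) (hr : r u < r v) : D v < #(earlierNeighbors G r v) := by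
  have : 0 < #(earlierNeighbors G r v) := card_pos.mpr ⟨u, by simp [huv, hr]⟩
  omega

theorem IsBurningOrder.apply_nonpos {D E : V → ℤ} {q : V} {r : V → ℕ}
    (h : IsBurningOrder G D q r) (hq : D q ≤ 0) (hE : LinEquiv G D E) (hEeff : Effective E) :
    E q ≤ 0 := by
  obtain ⟨f, hf⟩ := hE
  obtain ⟨m, -, hm⟩ := exists_max_image univ f ⟨q, mem_univ q⟩
  have hle : ∀ u, f u ≤ f m := fun u => hm u (mem_univ u)
  by_cases hfq : f q = f m
  · have : lap G f q ≤ 0 := by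
      rw [lap_eq_sum]
      exact sum_nonpos fun u _ => by split_ifs <;> linarith [hle u]
    linarith [hf q]
  · obtain ⟨w, hwmax, hwmin⟩ := exists_min_image {v | f v = f m} r ⟨m, by simp⟩
    have hfw : f w = f m := (mem_filter.mp hwmax).2
    have hwq : w ≠ q := by rintro rfl; exact hfq hfw
    -- the neighbours burnt before `w` are not maximisers of `f`, so each one takes a chip from `w`
    have hlap : lap G f w ≤ -(#(earlierNeighbors G r w) : ℤ) := by
      rw [lap_eq_sum, earlierNeighbors, natCast_card_filter, ← sum_neg_distrib]
      refine sum_le_sum fun u _ => ?_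
      by_cases hadj : G.Adj u w
      · by_cases hr : r u < r w
        · have : f u ≠ f m := fun hu => (hwmin u (by simp [hu])).not_gt hr
          simp only [hadj, hr, and_self, if_true]
          have := hle u
          omega
        · simp only [hadj, hr, and_false, if_true, if_false]
          linarith [hle u]
      · simp [hadj]
    linarith [hf w, h w hwq, hEeff w]

theorem IsBurningOrder.not_positiveRank {D D' : V → ℤ} {q : V} {r : V → ℕ}
    (h : IsBurningOrder G D q r) (hq : D q ≤ 0) (hD' : LinEquiv G D' D) :
    ¬PositiveRank G D' := fun hpos =>
  let ⟨_, hE, hEeff, hEq⟩ := hpos.of_linEquiv G hD' q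
  (h.apply_nonpos hq hE hEeff).not_gt hEq

end ChipFiring

theorem IsFerrers.mem_of_le_s4 {F : Finset (ℕ × ℕ)} (hF : IsFerrers F) {a b x y : ℕ}
    (hab : (a, b) ∈ F) (hx : 1 ≤ x) (hxa : x ≤ a) (hy : 1 ≤ y) (hyb : y ≤ b) : (x, y) ∈ F := by
  have hxb : (x, b) ∈ F := by
    induction hxa using Nat.decreasingInduction with
    | self => exact hab
    | of_succ n _ ih =>
      simpa using (hF _ (ih (by omega))).2.2.1.resolve_left (by dsimp only; omega)
  induction hyb using Nat.decreasingInduction with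
  | self => exact hxb
  | of_succ n _ ih =>
    simpa using (hF _ (ih (by omega))).2.2.2.resolve_left (by dsimp only; omega)

@[simp]
theorem rookGraph_adj {F : Finset (ℕ × ℕ)} {u v : {p // p ∈ F}} :
    (rookGraph F).Adj u v ↔ u ≠ v ∧ (u.1.1 = v.1.1 ∨ u.1.2 = v.1.2) :=
  Iff.rfl

/-- Firing every cell outside the first row moves each chip of `D_{k+1,1}` down its column. -/
def bottomRowDivisor (F : Finset (ℕ × ℕ)) (v : {p // p ∈ F}) : ℤ :=
  if v.1.2 = 1 then #{u : {p // p ∈ F} | u.1.1 = v.1.1 ∧ u.1.2 ≠ 1} else 0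

theorem linEquiv_Dxy_bottomRowDivisor {F : Finset (ℕ × ℕ)} (hF : IsFerrers F) {k : ℕ}
    (hrow1 : ∀ p ∈ F, p.1 ≤ k) :
    LinEquiv (rookGraph F) (Dxy F (k + 1) 1) (bottomRowDivisor F) := by
  refine ⟨fun v => if v.1.2 ≠ 1 then 1 else 0, fun w => ?_⟩
  obtain ⟨⟨x, y⟩, hw⟩ := w
  rw [lap_indicator]
  by_cases hy : y = 1
  · subst hy
    have hcol : ∀ u : {p // p ∈ F}, (rookGraph F).Adj u ⟨(x, 1), hw⟩ ∧ u.1.2 ≠ 1 ↔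
        u.1.1 = x ∧ u.1.2 ≠ 1 := by
      rintro ⟨⟨x', y'⟩, hu⟩
      simp only [rookGraph_adj, ne_eq, Subtype.mk.injEq, Prod.mk.injEq]
      tauto
    rw [if_neg (by simp), filter_congr fun u _ => hcol u]
    simp [Dxy, bottomRowDivisor]
  · have hbot : (x, 1) ∈ F := hF.mem_of_le_s4 hw (hF _ hw).1 le_rfl le_rfl (hF _ hw).2.1
    have hrow : ∀ u : {p // p ∈ F}, (rookGraph F).Adj u ⟨(x, y), hw⟩ ∧ ¬u.1.2 ≠ 1 ↔
        u = ⟨(x, 1), hbot⟩ := by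
      rintro ⟨⟨x', y'⟩, hu⟩
      simp only [rookGraph_adj, ne_eq, Subtype.mk.injEq, Prod.mk.injEq, not_not]
      constructor <;> intro h <;> omega
    have hxk : x ≤ k := hrow1 _ hw
    rw [if_pos (by simpa using hy), filter_congr fun u _ => hrow u]
    simp [Dxy, bottomRowDivisor, hy, filter_eq', show x ≠ k + 1 by omega]

theorem card_column_above_le {F : Finset (ℕ × ℕ)} (hF : IsFerrers F) {x m : ℕ}
    (hm : (x, m + 1) ∉ F) : #{u : {p // p ∈ F} | u.1.1 = x ∧ u.1.2 ≠ 1} ≤ m - 1 := by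
  calc _ ≤ #(Icc 2 m) := by
        refine card_le_card_of_injOn (fun u => u.1.2) ?_ ?_
        · rintro ⟨⟨x', y⟩, hu⟩ hxy
          obtain ⟨-, rfl, hy⟩ := mem_filter.mp (mem_coe.mp hxy)
          have hy2 : 2 ≤ y := by
            have : 1 ≤ y := (hF _ hu).2.1
            dsimp only at hy
            omega
          have hym : y ≤ m := by
            by_contra!
            exact hm (hF.mem_of_le_s4 hu (hF _ hu).1 le_rfl (by omega) this)
          exact mem_Icc.mpr ⟨hy2, hym⟩
        · rintro ⟨⟨x', y⟩, hu⟩ hxy ⟨⟨x'', y'⟩, hu'⟩ hxy' (h : y = y')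
          obtain ⟨-, rfl, -⟩ := mem_filter.mp (mem_coe.mp hxy)
          obtain ⟨-, rfl, -⟩ := mem_filter.mp (mem_coe.mp hxy')
          simp [h]
    _ = m - 1 := by simp

/-- The order in which fire started at `(k, 1)` reaches the cells: the rest of the first row
beyond column `ℓ`, then `(ℓ, 1)`, column `ℓ`, the second row, the higher rows, and finally the
first-row cells left of column `ℓ`. -/
def burnRank (k ℓ : ℕ) (p : ℕ × ℕ) : ℕ :=
  if p.2 = 1 then
    if p.1 = k then 0 else if ℓ < p.1 then 1 else if p.1 = ℓ then 2 else 6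
  else if p.1 = ℓ then 3 else if p.2 = 2 then 4 else 5

section BurningOrder

variable {F : Finset (ℕ × ℕ)} {k ℓ : ℕ}

theorem bottomRowDivisor_eq_zero_of_lt (hF : IsFerrers F) (hrow2 : ∀ p ∈ F, 2 ≤ p.2 → p.1 ≤ ℓ)
    {v : {p // p ∈ F}} (hv : ℓ < v.1.1) : bottomRowDivisor F v = 0 := by
  have : #{u : {p // p ∈ F} | u.1.1 = v.1.1 ∧ u.1.2 ≠ 1} = 0 := by
    refine card_eq_zero.mpr (filter_eq_empty_iff.mpr fun u _ ⟨hx, hy⟩ => ?_)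
    have := hrow2 u.1 u.2 (by have := (hF _ u.2).2.1; omega)
    omega
  rw [bottomRowDivisor, this]
  simp

theorem le_card_earlierNeighbors_corner (hF : IsFerrers F) (hk : (k, 1) ∈ F) (hℓk : ℓ < k)
    (hv : (ℓ, 1) ∈ F) :
    k - ℓ ≤ #(earlierNeighbors (rookGraph F) (fun v => burnRank k ℓ v.1) ⟨(ℓ, 1), hv⟩) := by
  calc k - ℓ = #(Ioc ℓ k) := by simp
    _ ≤ #(image (fun u => u.1.1)
          (earlierNeighbors (rookGraph F) (fun v => burnRank k ℓ v.1) ⟨(ℓ, 1), hv⟩)) := by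
      refine card_le_card fun x hx => ?_
      rw [mem_Ioc] at hx
      have hx1 : (x, 1) ∈ F := hF.mem_of_le_s4 hk (by omega) hx.2 le_rfl le_rfl
      refine mem_image.mpr ⟨⟨(x, 1), hx1⟩, ?_, rfl⟩
      simp [burnRank, hx.1, hx.1.ne', hℓk.ne]
      split_ifs <;> omega
    _ ≤ _ := card_image_le

theorem card_column_above_lt_card_earlierNeighbors (hk : (k, 1) ∈ F) (hℓk : ℓ < k) {x : ℕ}
    (hxℓ : x < ℓ) (hv : (x, 1) ∈ F) :
    #{u : {p // p ∈ F} | u.1.1 = x ∧ u.1.2 ≠ 1} <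
      #(earlierNeighbors (rookGraph F) (fun v => burnRank k ℓ v.1) ⟨(x, 1), hv⟩) := by
  have hxk : x ≠ k := by omega
  have hsub : insert ⟨(k, 1), hk⟩ ({u | u.1.1 = x ∧ u.1.2 ≠ 1} : Finset {p // p ∈ F}) ⊆
      earlierNeighbors (rookGraph F) (fun v => burnRank k ℓ v.1) ⟨(x, 1), hv⟩ := by
    intro u hu
    rw [mem_insert, mem_filter] at hu
    rcases hu with rfl | ⟨-, hux, huy⟩
    · simp [burnRank, hxk, hxℓ.ne, hxℓ.not_gt]
      omega
    · obtain ⟨⟨x', y⟩, hu⟩ := u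
      simp only at hux huy
      subst hux
      simp [burnRank, huy, hxk, hxℓ.ne, hxℓ.not_gt]
      split_ifs <;> omega
  have := card_le_card hsub
  rwa [card_insert_of_notMem (by simp), Nat.add_one_le_iff] at this

theorem isBurningOrder_bottomRowDivisor (hF : IsFerrers F)
    (hrow2 : ∀ p ∈ F, 2 ≤ p.2 → p.1 ≤ ℓ) (hk : (k, 1) ∈ F) (hrow1 : ∀ p ∈ F, p.1 ≤ k)
    (hl : (ℓ, 2) ∈ F) (hcond : (ℓ, k - ℓ + 1) ∉ F) (hℓk : ℓ < k) :
    IsBurningOrder (rookGraph F) (bottomRowDivisor F) ⟨(k, 1), hk⟩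
      (fun v => burnRank k ℓ v.1) := by
  rintro ⟨⟨x, y⟩, hv⟩ hvq
  have hx1 : 1 ≤ x := (hF _ hv).1
  have hy1 : 1 ≤ y := (hF _ hv).2.1
  by_cases hy : y = 1
  · subst hy
    have hxk : x ≠ k := by rintro rfl; exact hvq rfl
    rw [bottomRowDivisor, if_pos rfl]
    dsimp only
    rcases lt_trichotomy x ℓ with hxℓ | rfl | hℓx
    · exact_mod_cast card_column_above_lt_card_earlierNeighbors hk hℓk hxℓ hv
    · have := card_column_above_le hF hcond
      have := le_card_earlierNeighbors_corner hF hk hℓk hv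
      omega
    · have := hrow1 _ hv
      refine lt_card_earlierNeighbors_of_adj (u := ⟨(k, 1), hk⟩)
        (bottomRowDivisor_eq_zero_of_lt hF hrow2 hℓx).le ?_ ?_
      · simp; omega
      · simp [burnRank, hxk, hℓx]
  · have hD : bottomRowDivisor F ⟨(x, y), hv⟩ ≤ 0 := by simp [bottomRowDivisor, hy]
    have hxℓ : x ≤ ℓ := hrow2 _ hv (by omega)
    rcases hxℓ.eq_or_lt with rfl | hxℓ
    · refine lt_card_earlierNeighbors_of_adj
        (u := ⟨(x, 1), hF.mem_of_le_s4 hv hx1 le_rfl le_rfl hy1⟩) hD ?_ ?_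
      · simp; omega
      · simp [burnRank, hy, hℓk.ne]
    · rcases eq_or_ne y 2 with rfl | hy2
      · refine lt_card_earlierNeighbors_of_adj (u := ⟨(ℓ, 2), hl⟩) hD ?_ ?_
        · simp; omega
        · simp [burnRank, hxℓ.ne]
      · refine lt_card_earlierNeighbors_of_adj
          (u := ⟨(x, 2), hF.mem_of_le_s4 hv hx1 le_rfl (by omega) (by omega)⟩) hD ?_ ?_
        · simp; omega
        · simp [burnRank, hy, hy2, hxℓ.ne]

end BurningOrder

theorem stmt4_general (F : Finset (ℕ × ℕ)) (hF : IsFerrers F) (k ℓ : ℕ)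
    (hk : (k, 1) ∈ F) (hk' : (k + 1, 1) ∉ F)
    (hl : (ℓ, 2) ∈ F) (hl' : (ℓ + 1, 2) ∉ F)
    (hcond : (ℓ, k - ℓ + 1) ∉ F) :
    ¬ PositiveRank (rookGraph F) (Dxy F (k + 1) 1) := by
  have hrow1 : ∀ p ∈ F, p.1 ≤ k := fun p hp => by
    by_contra!
    exact hk' (hF.mem_of_le_s4 hp (by omega) this le_rfl (hF _ hp).2.1)
  have hrow2 : ∀ p ∈ F, 2 ≤ p.2 → p.1 ≤ ℓ := fun p hp hp2 => by
    by_contra!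
    exact hl' (hF.mem_of_le_s4 hp (by omega) this (by omega) hp2)
  have hℓk : ℓ < k := by
    have hl1 : (ℓ, 1) ∈ F := hF.mem_of_le_s4 hl (hF _ hl).1 le_rfl le_rfl (by omega)
    rcases (hrow1 _ hl1).lt_or_eq with h | rfl
    · exact h
    · exact absurd (by simpa using hl1) hcond
  refine (isBurningOrder_bottomRowDivisor hF hrow2 hk hrow1 hl hcond hℓk).not_positiveRank ?_
    (linEquiv_Dxy_bottomRowDivisor hF hrow1)
  exact (bottomRowDivisor_eq_zero_of_lt hF hrow2 hℓk).le

theorem stmt4 (F : Finset (ℕ × ℕ)) (hF : IsFerrers F) (k ℓ : ℕ)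
    (hk : (k, 1) ∈ F) (hk' : (k + 1, 1) ∉ F)
    (hℓ1 : 1 ≤ ℓ) (hl : (ℓ, 2) ∈ F) (hl' : (ℓ + 1, 2) ∉ F)
    (hcond : (ℓ, k - ℓ + 1) ∉ F) :
    ¬ PositiveRank (rookGraph F) (Dxy F (k + 1) 1) :=
  stmt4_general F hF k ℓ hk hk' hl hl' hcond
end

section
/- The gonality of the Ferrers rook graph of the Ferrers diagram with row lengths (4,2,1) equals 4. -/
open Finset

open scoped Classical

def F1 : Finset (ℕ × ℕ) := {(1, 1), (2, 1), (3, 1), (4, 1), (1, 2), (2, 2), (1, 3)}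

/-!
Upper bound: `D_{3,2}` has degree 4 and positive rank.

Lower bound: pairing a divisor with a vector `c` satisfying `L c ≡ 0 (mod N)` (with `L` the
Laplacian) is, since `L` is symmetric, a linear-equivalence invariant with values in `ZMod N`.
An effective divisor of degree `n + 1` with a chip on `v` pairs to an element of
`c v + n • {c w}`. For `R(F1)`, `N = 152` and `n ≤ 2`, no residue lies in all seven of these
sets, so no divisor of degree at most 3 has positive rank.
-/

open scoped Pointwise

section Laplacian

variable {V : Type*} [Fintype V] (G : SimpleGraph V)

theorem lap_eq_sum_neighborFinset [DecidableRel G.Adj] (f : V → ℤ) (w : V) :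
    lap G f w = ∑ u ∈ G.neighborFinset w, (f u - f w) := by
  rw [lap, Finset.mul_sum, ← Finset.sum_sub_distrib, SimpleGraph.neighborFinset_eq_filter,
    Finset.sum_filter]
  refine Finset.sum_congr rfl fun u _ => ?_
  by_cases h : G.Adj u w <;> simp [G.adj_comm w u, h]

theorem sum_mul_lap_comm (f g : V → ℤ) :
    ∑ w, g w * lap G f w = ∑ w, f w * lap G g w := by
  simp only [lap, mul_sub, Finset.mul_sum, Finset.sum_sub_distrib]
  congr 1
  · rw [Finset.sum_comm]
    refine Finset.sum_congr rfl fun w _ => Finset.sum_congr rfl fun u _ => ?_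
    rw [G.adj_comm]; ring
  · refine Finset.sum_congr rfl fun w _ => Finset.sum_congr rfl fun u _ => ?_
    ring

theorem lap_const_one (w : V) : lap G (fun _ => 1) w = 0 := by
  classical
  simp [lap_eq_sum_neighborFinset]

theorem sum_lap (f : V → ℤ) : ∑ w, lap G f w = 0 := by
  simpa [lap_const_one] using sum_mul_lap_comm G f (fun _ => 1)

end Laplacian

theorem Effective.sub_single {V : Type*} [DecidableEq V] {E : V → ℤ} (hE : Effective E) {v : V}
    (hv : 0 < E v) : Effective (E - Pi.single v 1) := by
  intro w
  by_cases h : w = v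
  · subst h
    simp only [Pi.sub_apply, Pi.single_eq_same, Int.sub_nonneg]
    omega
  · simp [h, hE w]

section Divisors

variable {V : Type*} [Fintype V] {G : SimpleGraph V} {D D' E : V → ℤ}

theorem LinEquiv.degD_eq (h : LinEquiv G D D') : degD D' = degD D := by
  obtain ⟨f, hf⟩ := h
  simp only [degD, hf, Finset.sum_add_distrib, sum_lap, add_zero]

def pairing (N : ℕ) (c D : V → ℤ) : ZMod N := ∑ v, (c v : ZMod N) * D v

def weightValues (N : ℕ) (c : V → ℤ) : Finset (ZMod N) := Finset.univ.image fun v => (c v : ZMod N)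

theorem mem_weightValues (N : ℕ) (c : V → ℤ) (v : V) : (c v : ZMod N) ∈ weightValues N c :=
  Finset.mem_image_of_mem _ (Finset.mem_univ v)

theorem LinEquiv.pairing_eq {N : ℕ} {c : V → ℤ} (hc : ∀ u, (lap G c u : ZMod N) = 0)
    (h : LinEquiv G D D') : pairing N c D' = pairing N c D := by
  obtain ⟨f, hf⟩ := h
  have hself := congrArg (Int.cast : ℤ → ZMod N) (sum_mul_lap_comm G f c)
  push_cast at hself
  simp only [pairing, hf, Int.cast_add, mul_add, Finset.sum_add_distrib, hself, hc, mul_zero,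
    Finset.sum_const_zero, add_zero]

theorem PositiveRank.of_firing (σ : V → V → ℤ)
    (h : ∀ v, Effective (D + lap G (σ v)) ∧ 0 < D v + lap G (σ v) v) : PositiveRank G D :=
  fun v => ⟨D + lap G (σ v), ⟨σ v, fun _ => rfl⟩, h v⟩

variable [DecidableEq V]

theorem degD_sub_single (v : V) : degD (E - Pi.single v 1) = degD E - 1 := by
  simp [degD, Finset.sum_sub_distrib]

theorem pairing_sub_single (N : ℕ) (c : V → ℤ) (v : V) :
    pairing N c (E - Pi.single v 1) = pairing N c E - c v := by
  simp [pairing, mul_sub, Finset.sum_sub_distrib, Pi.single_apply]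

theorem Effective.pairing_mem_nsmul {N : ℕ} (c : V → ℤ) :
    ∀ (n : ℕ) {E : V → ℤ}, Effective E → degD E = n →
      pairing N c E ∈ n • weightValues N c
  | 0, E, hE, hdeg => by
    have hzero : ∀ v, E v = 0 := fun v =>
      (Finset.sum_eq_zero_iff_of_nonneg fun v _ => hE v).1 (by simpa [degD] using hdeg) v
        (Finset.mem_univ v)
    simp [pairing, hzero]
  | n + 1, E, hE, hdeg => by
    obtain ⟨v, hv⟩ : ∃ v, 0 < E v := by
      by_contra! hneg
      have : degD E ≤ 0 := Finset.sum_nonpos fun v _ => hneg v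
      omega
    have hrest :=
      pairing_mem_nsmul (N := N) c n (hE.sub_single hv) (by rw [degD_sub_single]; omega)
    rw [pairing_sub_single] at hrest
    rw [succ_nsmul]
    simpa using Finset.add_mem_add hrest (mem_weightValues N c v)

theorem Effective.pairing_sub_mem_nsmul {N : ℕ} (c : V → ℤ) (hE : Effective E) {v : V}
    (hv : 0 < E v) : ∃ n : ℕ, degD E = n + 1 ∧
      pairing N c E - c v ∈ n • weightValues N c := by
  have hE' := hE.sub_single hv
  have hdeg : 0 ≤ degD E - 1 := degD_sub_single (E := E) v ▸ Finset.sum_nonneg fun w _ => hE' w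
  refine ⟨(degD E - 1).toNat, by omega, ?_⟩
  rw [← pairing_sub_single]
  exact Effective.pairing_mem_nsmul c _ hE' (by rw [degD_sub_single]; omega)

end Divisors

instance (F : Finset (ℕ × ℕ)) : DecidableRel (rookGraph F).Adj := fun a b =>
  inferInstanceAs (Decidable (a ≠ b ∧ (a.1.1 = b.1.1 ∨ a.1.2 = b.1.2)))

/-- `R(F1)` has 152 spanning trees, so its Jacobian has order 152; pairing with this solution of
`L c ≡ 0 (mod 152)` identifies the Jacobian with `ZMod 152` (`c (3,1) - c (1,1) = 73` is a unit). -/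
def jacobianWeight (v : {p // p ∈ F1}) : ℤ :=
  match v.1 with
  | (2, 1) => 32
  | (3, 1) => 73
  | (4, 1) => 35
  | (1, 2) => 8
  | (2, 2) => 20
  | (1, 3) => 4
  | _ => 0

theorem lap_jacobianWeight_eq_zero (u : {p // p ∈ F1}) :
    (lap (rookGraph F1) jacobianWeight u : ZMod 152) = 0 := by
  rw [lap_eq_sum_neighborFinset]
  revert u
  decide

theorem exists_sub_jacobianWeight_notMem_nsmul : ∀ n < 3, ∀ r : ZMod 152, ∃ v : {p // p ∈ F1},
    r - jacobianWeight v ∉ n • weightValues 152 jacobianWeight := by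
  decide +kernel

/-- Vertices of row `y` or column `x` carry no chip of `D_{x,y}`; letting that whole line
borrow once puts chips on it and takes one from each chip-carrying neighbour. -/
def lineBorrowing {F : Finset (ℕ × ℕ)} (x y : ℕ) (v w : {p // p ∈ F}) : ℤ :=
  if v.1.2 = y then -(if w.1.2 = y then 1 else 0)
  else if v.1.1 = x then -(if w.1.1 = x then 1 else 0) else 0

theorem positiveRank_Dxy : PositiveRank (rookGraph F1) (Dxy F1 3 2) := by
  refine PositiveRank.of_firing (lineBorrowing 3 2) fun v => ?_
  simp only [Effective, Pi.add_apply, lap_eq_sum_neighborFinset]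
  revert v
  decide

theorem degD_Dxy : degD (Dxy F1 3 2) = 4 := by decide

theorem stmt15 : IsLeast (gonSet F1) 4 := by
  refine ⟨⟨Dxy F1 3 2, positiveRank_Dxy, degD_Dxy⟩, ?_⟩
  rintro d ⟨D, hD, rfl⟩
  by_contra! hlt
  have hclass (v : {p // p ∈ F1}) : ∃ n : ℕ, degD D = n + 1 ∧
      pairing 152 jacobianWeight D - jacobianWeight v ∈ n • weightValues 152 jacobianWeight := by
    obtain ⟨E, hDE, hE, hv⟩ := hD v
    rw [← hDE.degD_eq, ← hDE.pairing_eq lap_jacobianWeight_eq_zero]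
    exact hE.pairing_sub_mem_nsmul _ hv
  obtain ⟨n, hn, -⟩ := hclass ⟨(1, 1), by decide⟩
  obtain ⟨v, hv⟩ :=
    exists_sub_jacobianWeight_notMem_nsmul n (by omega) (pairing 152 jacobianWeight D)
  obtain ⟨m, hm, hmem⟩ := hclass v
  obtain rfl : m = n := by omega
  exact hv hmem
end
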